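/- arXiv:2605.27972 — 2 statements merged into one kernel-verified Lean document; each statement's English description precedes it below -/
import Mathlib

section
/- Let W be an n×n real symmetric positive definite matrix with smallest eigenvalue α > 0, and let g ∈ ℝⁿ. If λ ∈ ℝⁿ solves the linear complementarity problem LCP(W, g), then α · ‖λ‖₂ ≤ ‖g‖₂; in particular ‖λ‖₂ ≤ ‖g‖₂ / α, so the solution is bounded. -/
open Matrix BigOperators

noncomputable def euclidNorm {n : ℕ} (x : Fin n → ℝ) : ℝ :=
  Real.sqrt (∑ i, (x i) ^ 2)

lemma euclidNorm_eq_norm_toLp {n : ℕ} (x : Fin n → ℝ) :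
    euclidNorm x = ‖(WithLp.toLp 2 x : EuclideanSpace ℝ (Fin n))‖ := by
  simp [euclidNorm, EuclideanSpace.norm_eq]

lemma abs_dotProduct_le_euclidNorm_mul {n : ℕ} (x y : Fin n → ℝ) :
    |x ⬝ᵥ y| ≤ euclidNorm x * euclidNorm y := by
  rw [euclidNorm_eq_norm_toLp, euclidNorm_eq_norm_toLp]
  simpa [EuclideanSpace.inner_eq_star_dotProduct, dotProduct_comm] using
    abs_real_inner_le_norm (WithLp.toLp 2 x : EuclideanSpace ℝ (Fin n)) (WithLp.toLp 2 y)

lemma mul_le_of_mul_sq_le_mul {a c t : ℝ} (ht : 0 ≤ t) (hc : 0 ≤ c)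
    (h : a * t ^ 2 ≤ t * c) : a * t ≤ c := by
  rcases ht.eq_or_lt with rfl | ht
  · simpa using hc
  · exact le_of_mul_le_mul_left (by linarith) ht

theorem lcp_solution_bounded_general (n : ℕ) (W : Matrix (Fin n) (Fin n) ℝ)
    (α : ℝ) (hα : 0 < α)
    (hEig : ∀ x : Fin n → ℝ, α * euclidNorm x ^ 2 ≤ x ⬝ᵥ W.mulVec x)
    (g lam : Fin n → ℝ)
    (h3 : lam ⬝ᵥ (W.mulVec lam + g) = 0) :
    α * euclidNorm lam ≤ euclidNorm g ∧ euclidNorm lam ≤ euclidNorm g / α := by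
  have key : α * euclidNorm lam ^ 2 ≤ euclidNorm lam * euclidNorm g :=
    calc α * euclidNorm lam ^ 2 ≤ lam ⬝ᵥ W.mulVec lam := hEig lam
      _ = -(lam ⬝ᵥ g) := by rw [dotProduct_add] at h3; linarith
      _ ≤ |lam ⬝ᵥ g| := neg_le_abs _
      _ ≤ euclidNorm lam * euclidNorm g := abs_dotProduct_le_euclidNorm_mul lam g
  have hmain : α * euclidNorm lam ≤ euclidNorm g :=
    mul_le_of_mul_sq_le_mul (Real.sqrt_nonneg _) (Real.sqrt_nonneg _) key
  exact ⟨hmain, (le_div_iff₀ hα).2 (by linarith)⟩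

/-- For a symmetric positive definite `W` whose smallest eigenvalue `α > 0` satisfies
`λᵀWλ ≥ α‖λ‖₂²`, any solution `λ` of `LCP(W, g)` satisfies `α‖λ‖₂ ≤ ‖g‖₂`, hence
`‖λ‖₂ ≤ ‖g‖₂/α`. -/
theorem lcp_solution_bounded (n : ℕ) (W : Matrix (Fin n) (Fin n) ℝ) (hW : W.PosDef)
    (α : ℝ) (hα : 0 < α)
    (hEig : ∀ x : Fin n → ℝ, α * euclidNorm x ^ 2 ≤ x ⬝ᵥ W.mulVec x)
    (g lam : Fin n → ℝ)
    (h1 : ∀ i, 0 ≤ lam i) (h2 : ∀ i, 0 ≤ (W.mulVec lam + g) i)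
    (h3 : lam ⬝ᵥ (W.mulVec lam + g) = 0) :
    α * euclidNorm lam ≤ euclidNorm g ∧ euclidNorm lam ≤ euclidNorm g / α :=
  lcp_solution_bounded_general n W α hα hEig g lam h3
end

section
/- Let W and D be n×n real symmetric positive definite matrices, let α > 0 be the smallest eigenvalue of D, and let g ∈ ℝⁿ. Suppose λ ∈ ℝⁿ solves the linear complementarity problem LCP(W, g) and λ̂ ∈ ℝⁿ solves LCP(D, g). Then the perturbation bound ‖λ − λ̂‖₂ ≤ (1/α) · ‖W − D‖_op · ‖λ‖₂ holds, where ‖W − D‖_op is the operator norm of W − D with respect to the Euclidean norm. In particular, the approximation error of the surrogate solution λ̂ is controlled by the distance ‖W − D‖_op between the true and surrogate matrices. -/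
open Matrix BigOperators

/-- Euclidean norm on `ℝⁿ`. -/
noncomputable def enorm {n : ℕ} (x : Fin n → ℝ) : ℝ :=
  Real.sqrt (∑ i, (x i) ^ 2)

/-- Operator norm of a real matrix acting between Euclidean spaces. -/
noncomputable def opNorm {m n : ℕ} (A : Matrix (Fin m) (Fin n) ℝ) : ℝ :=
  ‖LinearMap.toContinuousLinearMap (Matrix.toEuclideanLin A)‖

/-!
Write `e = λ - λ̂`. Complementarity of both solutions gives the monotonicity inequality
`eᵀ(Wλ - Dλ̂) ≤ 0`, and `De = (Wλ - Dλ̂) - (W - D)λ`. Hence, by coercivity of `D` and Cauchy–Schwarz,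
`α‖e‖² ≤ eᵀDe ≤ -eᵀ(W - D)λ ≤ ‖e‖ ‖W - D‖_op ‖λ‖`, and dividing by `α‖e‖` gives the bound.
-/

section Complementarity

variable {ι R : Type*} [Fintype ι] [CommRing R] [PartialOrder R] [IsOrderedRing R]

lemma dotProduct_sub_sub_nonpos_of_complementary {x w y v : ι → R}
    (hx : 0 ≤ x) (hw : 0 ≤ w) (hy : 0 ≤ y) (hv : 0 ≤ v)
    (hxw : x ⬝ᵥ w = 0) (hyv : y ⬝ᵥ v = 0) :
    (x - y) ⬝ᵥ (w - v) ≤ 0 := by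
  calc (x - y) ⬝ᵥ (w - v) = -(x ⬝ᵥ v + y ⬝ᵥ w) := by
        simp only [sub_dotProduct, dotProduct_sub, hxw, hyv]
        ring
    _ ≤ 0 := neg_nonpos.2 <|
        add_nonneg (dotProduct_nonneg_of_nonneg hx hv) (dotProduct_nonneg_of_nonneg hy hw)

def IsLCPSolution (M : Matrix ι ι R) (q x : ι → R) : Prop :=
  0 ≤ x ∧ 0 ≤ M *ᵥ x + q ∧ x ⬝ᵥ (M *ᵥ x + q) = 0

lemma IsLCPSolution.dotProduct_sub_mulVec_sub_nonpos {M N : Matrix ι ι R} {q x y : ι → R}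
    (hx : IsLCPSolution M q x) (hy : IsLCPSolution N q y) :
    (x - y) ⬝ᵥ (M *ᵥ x - N *ᵥ y) ≤ 0 := by
  simpa only [add_sub_add_right_eq_sub] using
    dotProduct_sub_sub_nonpos_of_complementary hx.1 hx.2.1 hy.1 hy.2.1 hx.2.2 hy.2.2

end Complementarity

section EuclideanNorm

variable {m n : ℕ}

lemma enorm_eq_norm_toLp (x : Fin n → ℝ) : _root_.enorm x = ‖WithLp.toLp 2 x‖ := by
  simp [_root_.enorm, EuclideanSpace.norm_eq]

lemma enorm_nonneg (x : Fin n → ℝ) : 0 ≤ _root_.enorm x :=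
  Real.sqrt_nonneg _

lemma opNorm_nonneg (A : Matrix (Fin m) (Fin n) ℝ) : 0 ≤ opNorm A :=
  norm_nonneg _

lemma enorm_mulVec_le (A : Matrix (Fin m) (Fin n) ℝ) (x : Fin n → ℝ) :
    _root_.enorm (A *ᵥ x) ≤ opNorm A * _root_.enorm x := by
  rw [enorm_eq_norm_toLp, enorm_eq_norm_toLp]
  exact (LinearMap.toContinuousLinearMap (Matrix.toEuclideanLin A)).le_opNorm (WithLp.toLp 2 x)

lemma abs_dotProduct_le_enorm_mul_enorm (x y : Fin n → ℝ) :
    |x ⬝ᵥ y| ≤ _root_.enorm x * _root_.enorm y := by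
  rw [enorm_eq_norm_toLp, enorm_eq_norm_toLp, mul_comm]
  simpa [EuclideanSpace.inner_toLp_toLp] using
    abs_real_inner_le_norm (WithLp.toLp 2 y) (WithLp.toLp 2 x)

end EuclideanNorm

lemma le_div_of_mul_sq_le_mul {α t c : ℝ} (hα : 0 < α) (ht : 0 ≤ t) (hc : 0 ≤ c)
    (h : α * t ^ 2 ≤ t * c) : t ≤ c / α := by
  rw [le_div_iff₀ hα]
  rcases ht.eq_or_lt with rfl | ht
  · simpa using hc
  · exact le_of_mul_le_mul_left (by linarith) ht

theorem lcp_perturbation_bound_general (n : ℕ) (W D : Matrix (Fin n) (Fin n) ℝ)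
    (α : ℝ) (hα : 0 < α)
    (hEig : ∀ x : Fin n → ℝ, α * _root_.enorm x ^ 2 ≤ x ⬝ᵥ D.mulVec x)
    (g lam lamhat : Fin n → ℝ)
    (hlam₁ : ∀ i, 0 ≤ lam i) (hlam₂ : ∀ i, 0 ≤ (W.mulVec lam + g) i)
    (hlam₃ : lam ⬝ᵥ (W.mulVec lam + g) = 0)
    (hhat₁ : ∀ i, 0 ≤ lamhat i) (hhat₂ : ∀ i, 0 ≤ (D.mulVec lamhat + g) i)
    (hhat₃ : lamhat ⬝ᵥ (D.mulVec lamhat + g) = 0) :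
    _root_.enorm (lam - lamhat) ≤ (1 / α) * opNorm (W - D) * _root_.enorm lam := by
  set e := lam - lamhat
  have hmono : e ⬝ᵥ (W *ᵥ lam - D *ᵥ lamhat) ≤ 0 :=
    IsLCPSolution.dotProduct_sub_mulVec_sub_nonpos ⟨hlam₁, hlam₂, hlam₃⟩ ⟨hhat₁, hhat₂, hhat₃⟩
  have hsplit : e ⬝ᵥ D *ᵥ e = e ⬝ᵥ (W *ᵥ lam - D *ᵥ lamhat) - e ⬝ᵥ ((W - D) *ᵥ lam) := by
    simp only [e, sub_mulVec, mulVec_sub, dotProduct_sub]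
    ring
  have hcoercive : α * _root_.enorm e ^ 2 ≤ _root_.enorm e * (opNorm (W - D) * _root_.enorm lam) :=
    calc α * _root_.enorm e ^ 2
        ≤ e ⬝ᵥ D *ᵥ e := hEig e
      _ ≤ -(e ⬝ᵥ ((W - D) *ᵥ lam)) := by linarith
      _ ≤ |e ⬝ᵥ ((W - D) *ᵥ lam)| := neg_le_abs _
      _ ≤ _root_.enorm e * _root_.enorm ((W - D) *ᵥ lam) := abs_dotProduct_le_enorm_mul_enorm _ _
      _ ≤ _root_.enorm e * (opNorm (W - D) * _root_.enorm lam) :=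
        mul_le_mul_of_nonneg_left (enorm_mulVec_le _ _) (enorm_nonneg e)
  rw [mul_assoc, one_div_mul_eq_div]
  exact le_div_of_mul_sq_le_mul hα (enorm_nonneg e)
    (mul_nonneg (opNorm_nonneg _) (enorm_nonneg lam)) hcoercive

/-- Perturbation bound for LCP solutions: if `λ` solves `LCP(W, g)` and `λ̂` solves
`LCP(D, g)`, where `W, D` are symmetric positive definite and the smallest eigenvalue
`α > 0` of `D` satisfies `xᵀDx ≥ α‖x‖₂²`, then `‖λ - λ̂‖₂ ≤ (1/α)·‖W - D‖_op·‖λ‖₂`. -/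
theorem lcp_perturbation_bound (n : ℕ) (W D : Matrix (Fin n) (Fin n) ℝ)
    (hW : W.PosDef) (hD : D.PosDef)
    (α : ℝ) (hα : 0 < α)
    (hEig : ∀ x : Fin n → ℝ, α * _root_.enorm x ^ 2 ≤ x ⬝ᵥ D.mulVec x)
    (g lam lamhat : Fin n → ℝ)
    (hlam₁ : ∀ i, 0 ≤ lam i) (hlam₂ : ∀ i, 0 ≤ (W.mulVec lam + g) i)
    (hlam₃ : lam ⬝ᵥ (W.mulVec lam + g) = 0)
    (hhat₁ : ∀ i, 0 ≤ lamhat i) (hhat₂ : ∀ i, 0 ≤ (D.mulVec lamhat + g) i)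
    (hhat₃ : lamhat ⬝ᵥ (D.mulVec lamhat + g) = 0) :
    _root_.enorm (lam - lamhat) ≤ (1 / α) * opNorm (W - D) * _root_.enorm lam :=
  lcp_perturbation_bound_general n W D α hα hEig g lam lamhat hlam₁ hlam₂ hlam₃ hhat₁ hhat₂ hhat₃
end
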